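/- arXiv:2410.18757 — 2 statements merged into one kernel-verified Lean document; each statement's English description precedes it below -/
import Mathlib

section
/- Let N ≥ 1, let ω = exp(−2πi/N), and let z : {0, …, N−1} → ℂ be a vector whose support is contained in a set S ⊆ {0, …, N−1} of cardinality s. If the DFT of z vanishes on s consecutive frequency bins, i.e. ∑_{n=0}^{N−1} z[n]·ω^{k·n} = 0 for all k ∈ {k₀, k₀+1, …, k₀+s−1} for some integer k₀, then z = 0. -/
open Complex Finset

/-- If `z : Fin N → ℂ` is supported on a set `S` of cardinality `s`
and its length-`N` DFT vanishes on `s` consecutive frequency bins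
`k₀, k₀+1, …, k₀+s-1`, then `z = 0`. -/
theorem stmt2 (N : ℕ) (hN : 1 ≤ N)
    (ω : ℂ) (hω : ω = Complex.exp (-2 * Real.pi * Complex.I / N))
    (z : Fin N → ℂ) (S : Finset (Fin N)) (s : ℕ) (hS : S.card = s)
    (hsupp : ∀ n : Fin N, z n ≠ 0 → n ∈ S) (k₀ : ℤ)
    (hDFT : ∀ k : ℤ, k₀ ≤ k → k < k₀ + s →
      ∑ n : Fin N, z n * ω ^ (k * ((n : ℕ) : ℤ)) = 0) :
    z = 0 := by
  subst hS
  have hω0 : ω ≠ 0 := by rw [hω]; exact Complex.exp_ne_zero _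
  have hprim : IsPrimitiveRoot ω N := by
    have h1 : ω = (Complex.exp (2 * Real.pi * Complex.I / N))⁻¹ := by
      rw [hω, ← Complex.exp_neg]; ring_nf
    rw [h1]
    exact (Complex.isPrimitiveRoot_exp N (by omega)).inv
  -- the nodes
  set e := S.equivFin with he
  set f : Fin S.card → ℂ := fun i => ω ^ ((e.symm i : Fin N) : ℕ) with hf
  have hfinj : Function.Injective f := by
    intro i j hij
    have h1 : ((e.symm i : Fin N) : ℕ) = ((e.symm j : Fin N) : ℕ) :=
      hprim.pow_inj (e.symm i : Fin N).2 (e.symm j : Fin N).2 hij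
    have h2 : (e.symm i : Fin N) = (e.symm j : Fin N) := Fin.ext h1
    exact e.symm.injective (Subtype.ext h2)
  set v : Fin S.card → ℂ := fun i => z (e.symm i : Fin N) * ω ^ (k₀ * (((e.symm i : Fin N) : ℕ) : ℤ)) with hv
  have key : ∀ i : Fin S.card, (∑ j : Fin S.card, v j * f j ^ (i : ℕ)) = 0 := by
    intro i
    have hk := hDFT (k₀ + i) (by omega) (by
      have : (i : ℤ) < (S.card : ℤ) := by exact_mod_cast i.2
      omega)
    -- restrict sum to S
    have hS' : ∑ n : Fin N, z n * ω ^ ((k₀ + i) * ((n : ℕ) : ℤ))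
        = ∑ n ∈ S, z n * ω ^ ((k₀ + i) * ((n : ℕ) : ℤ)) := by
      rw [← Finset.sum_subset (Finset.subset_univ S)]
      intro x _ hx
      have : z x = 0 := by
        by_contra hzx; exact hx (hsupp x hzx)
      rw [this, zero_mul]
    have hreindex : ∑ n ∈ S, z n * ω ^ ((k₀ + i) * ((n : ℕ) : ℤ))
        = ∑ j : Fin S.card, z (e.symm j : Fin N) *
            ω ^ ((k₀ + i) * ((((e.symm j : Fin N) : ℕ)) : ℤ)) := by
      rw [← Finset.sum_attach S (fun n => z n * ω ^ ((k₀ + i) * ((n : ℕ) : ℤ)))]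
      exact (Equiv.sum_comp e.symm _).symm
    have hterm : ∀ j : Fin S.card,
        z (e.symm j : Fin N) * ω ^ ((k₀ + i) * ((((e.symm j : Fin N) : ℕ)) : ℤ))
          = v j * f j ^ (i : ℕ) := by
      intro j
      rw [hv, hf]
      have : ((k₀ + i) * ((((e.symm j : Fin N) : ℕ)) : ℤ))
          = k₀ * (((e.symm j : Fin N) : ℕ) : ℤ) + (i : ℤ) * (((e.symm j : Fin N) : ℕ) : ℤ) := by
        ring
      rw [this, zpow_add₀ hω0, ← mul_assoc]
      congr 1
      rw [← zpow_natCast (ω ^ (((e.symm j : Fin N)) : ℕ)) (i : ℕ),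
        ← zpow_natCast ω (((e.symm j : Fin N)) : ℕ), ← zpow_mul, mul_comm]
    rw [hS', hreindex] at hk
    rw [← hk]
    exact Finset.sum_congr rfl (fun j _ => (hterm j).symm)
  have hv0 : v = 0 := Matrix.eq_zero_of_forall_pow_sum_mul_pow_eq_zero hfinj key
  funext n
  by_cases hn : n ∈ S
  · have h1 : v (e ⟨n, hn⟩) = 0 := by rw [hv0]; rfl
    rw [hv] at h1
    simp only [Equiv.symm_apply_apply] at h1
    rcases mul_eq_zero.mp h1 with h | h
    · exact h
    · exact absurd h (zpow_ne_zero _ hω0)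
  · by_contra hzn
    exact hn (hsupp n hzn)
end

section
/- Let N ≥ 1, let ω = exp(−2πi/N), and let z, z' : {0, …, N−1} → ℂ be two vectors whose supports are both contained in a set S ⊆ {0, …, N−1} of cardinality s. If their DFTs agree on s consecutive frequency bins, i.e. ∑_{n=0}^{N−1} z[n]·ω^{k·n} = ∑_{n=0}^{N−1} z'[n]·ω^{k·n} for all k ∈ {k₀, …, k₀+s−1} for some integer k₀, then z = z'. -/
open Complex Finset

lemma vand {ι : Type*} [DecidableEq ι] (S : Finset ι) (v : ι → ℂ)
    (hv : Set.InjOn v S) (d : ι → ℂ)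
    (h : ∀ j < S.card, ∑ n ∈ S, d n * v n ^ j = 0) :
    ∀ n ∈ S, d n = 0 := by
  intro n hn
  set p := Lagrange.basis S v n with hp
  have hdeg : p.degree = ((S.card - 1 : ℕ) : WithBot ℕ) := Lagrange.degree_basis hv hn
  have hcard : 0 < S.card := card_pos.mpr ⟨n, hn⟩
  have hnd : p.natDegree < S.card := by
    have := Polynomial.natDegree_eq_of_degree_eq_some hdeg
    omega
  have key : ∑ m ∈ S, d m * p.eval (v m) = d n := by
    rw [← Finset.add_sum_erase _ _ hn, Lagrange.eval_basis_self hv hn, mul_one]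
    have : ∑ m ∈ S.erase n, d m * p.eval (v m) = 0 := by
      refine Finset.sum_eq_zero fun m hm => ?_
      rw [Lagrange.eval_basis_of_ne (Finset.ne_of_mem_erase hm).symm
        (Finset.mem_of_mem_erase hm), mul_zero]
    rw [this, add_zero]
  have key2 : ∑ m ∈ S, d m * p.eval (v m) = 0 := by
    have heval : ∀ m : ι, p.eval (v m) = ∑ j ∈ Finset.range S.card, p.coeff j * v m ^ j :=
      fun m => Polynomial.eval_eq_sum_range' hnd _
    simp_rw [heval, Finset.mul_sum]
    rw [Finset.sum_comm]
    refine Finset.sum_eq_zero fun j hj => ?_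
    have h0 := h j (Finset.mem_range.mp hj)
    calc ∑ m ∈ S, d m * (p.coeff j * v m ^ j)
        = p.coeff j * ∑ m ∈ S, d m * v m ^ j := by
          rw [Finset.mul_sum]; exact Finset.sum_congr rfl fun m _ => by ring
      _ = 0 := by rw [h0, mul_zero]
  rw [key2] at key
  exact key.symm

/-- If `z, z' : Fin N → ℂ` are both supported on a set `S` of
cardinality `s` and their length-`N` DFTs agree on `s` consecutive frequency
bins `k₀, …, k₀+s-1`, then `z = z'`. -/
theorem stmt3 (N : ℕ) (hN : 1 ≤ N)
    (ω : ℂ) (hω : ω = Complex.exp (-2 * Real.pi * Complex.I / N))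
    (z z' : Fin N → ℂ) (S : Finset (Fin N)) (s : ℕ) (hS : S.card = s)
    (hsupp : ∀ n : Fin N, z n ≠ 0 → n ∈ S)
    (hsupp' : ∀ n : Fin N, z' n ≠ 0 → n ∈ S) (k₀ : ℤ)
    (hDFT : ∀ k : ℤ, k₀ ≤ k → k < k₀ + s →
      ∑ n : Fin N, z n * ω ^ (k * ((n : ℕ) : ℤ)) =
      ∑ n : Fin N, z' n * ω ^ (k * ((n : ℕ) : ℤ))) :
    z = z' := by
  have hω0 : ω ≠ 0 := by rw [hω]; exact Complex.exp_ne_zero _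
  -- ω is a primitive N-th root of unity
  have hprim : IsPrimitiveRoot ω N := by
    have h1 : IsPrimitiveRoot (Complex.exp (2 * Real.pi * Complex.I / N)) N :=
      Complex.isPrimitiveRoot_exp N (by omega)
    have h2 : ω = (Complex.exp (2 * Real.pi * Complex.I / N))⁻¹ := by
      rw [hω, ← Complex.exp_neg]
      ring_nf
    rw [h2]
    exact h1.inv
  -- injectivity of n ↦ ω^n on Fin N
  have hinj : Set.InjOn (fun n : Fin N => ω ^ (n : ℕ)) S := by
    intro a _ b _ hab
    exact Fin.ext (hprim.pow_inj a.isLt b.isLt hab)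
  set d : Fin N → ℂ := fun n => (z n - z' n) * ω ^ (k₀ * ((n : ℕ) : ℤ)) with hd
  have hvand : ∀ j < S.card, ∑ n ∈ S, d n * ((fun n : Fin N => ω ^ (n : ℕ)) n) ^ j = 0 := by
    intro j hj
    rw [hS] at hj
    have hk := hDFT (k₀ + j) (by omega) (by omega)
    have hsum : ∑ n : Fin N, (z n - z' n) * ω ^ ((k₀ + j) * ((n : ℕ) : ℤ)) = 0 := by
      simp_rw [sub_mul, Finset.sum_sub_distrib]
      rw [hk, sub_self]
    have hterm : ∀ n : Fin N,
        (z n - z' n) * ω ^ ((k₀ + j) * ((n : ℕ) : ℤ)) = d n * (ω ^ (n : ℕ)) ^ j := by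
      intro n
      rw [hd]
      have : ((k₀ + j) * ((n : ℕ) : ℤ)) = k₀ * ((n : ℕ) : ℤ) + ((j * n : ℕ) : ℤ) := by
        push_cast; ring
      rw [this, zpow_add₀ hω0, zpow_natCast, pow_mul', mul_assoc]
    simp_rw [hterm] at hsum
    rw [← hsum]
    beta_reduce
    apply Finset.sum_subset (Finset.subset_univ S)
    intro n _ hns
    have hz : z n = 0 := by by_contra hc; exact hns (hsupp n hc)
    have hz' : z' n = 0 := by by_contra hc; exact hns (hsupp' n hc)
    simp [hd, hz, hz']
  have hzero := vand S _ hinj d hvand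
  funext n
  by_cases hn : n ∈ S
  · have h0 := hzero n hn
    rw [hd] at h0
    have : z n - z' n = 0 := by
      rcases mul_eq_zero.mp h0 with h | h
      · exact h
      · exact absurd h (zpow_ne_zero _ hω0)
    exact sub_eq_zero.mp this
  · have hz : z n = 0 := by by_contra hc; exact hn (hsupp n hc)
    have hz' : z' n = 0 := by by_contra hc; exact hn (hsupp' n hc)
    rw [hz, hz']
end
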